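/- If a generalized median voter scheme f^p satisfies p_{{i}} < p_{N\{i}} for some agent i and is NOM, then agent i is a dictator. -/

import Mathlib

/-- A preference profile: each agent `i : Fin n` has a strict preference,
modeled as a linear order on the set of alternatives `X`. -/
abbrev Profile (n : ℕ) (X : Type*) := Fin n → LinearOrder X

/-- The top (best) alternative of a preference `L`. -/
noncomputable def top {X : Type*} [Fintype X] [Nonempty X] (L : LinearOrder X) : X :=
  @Finset.max' X L Finset.univ Finset.univ_nonempty

/-- `x` is strictly preferred to `y` according to `L`. -/
def prefers {X : Type*} (L : LinearOrder X) (x y : X) : Prop := L.lt y x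

/-- The option set left open by preference `L` of agent `i` at rule `f`. -/
def OptionSet {n : ℕ} {X : Type*} (f : Profile n X → X) (i : Fin n) (L : LinearOrder X) :
    Set X :=
  {x | ∃ P : Profile n X, P i = L ∧ f P = x}

/-- `Li'` is a profitable manipulation of `f` at (true preference) `Li` for agent `i`. -/
def IsManip {n : ℕ} {X : Type*} (f : Profile n X → X) (i : Fin n)
    (Li Li' : LinearOrder X) : Prop :=
  ∃ P : Profile n X, P i = Li ∧ prefers Li (f (Function.update P i Li')) (f P)

/-- The worst element of `O(Li')` is strictly `Li`-preferred to the worst element of `O(Li)`.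
For nonempty finite option sets this is equivalent to: some element of `O(Li)` is strictly
worse (w.r.t. `Li`) than every element of `O(Li')`. -/
def WorstImproves {n : ℕ} {X : Type*} (f : Profile n X → X) (i : Fin n)
    (Li Li' : LinearOrder X) : Prop :=
  ∃ w ∈ OptionSet f i Li, ∀ w' ∈ OptionSet f i Li', prefers Li w' w

/-- The best element of `O(Li')` is strictly `Li`-preferred to the best element of `O(Li)`.
For nonempty finite option sets this is equivalent to: some element of `O(Li')` is strictly
better (w.r.t. `Li`) than every element of `O(Li)`. -/
def BestImproves {n : ℕ} {X : Type*} (f : Profile n X → X) (i : Fin n)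
    (Li Li' : LinearOrder X) : Prop :=
  ∃ b' ∈ OptionSet f i Li', ∀ b ∈ OptionSet f i Li, prefers Li b' b

/-- `Li'` is an obvious manipulation of `f` at `Li` for agent `i`. -/
def IsObviousManip {n : ℕ} {X : Type*} (f : Profile n X → X) (i : Fin n)
    (Li Li' : LinearOrder X) : Prop :=
  IsManip f i Li Li' ∧ (WorstImproves f i Li Li' ∨ BestImproves f i Li Li')

/-- `f` is not obviously manipulable. -/
def NOM {n : ℕ} {X : Type*} (f : Profile n X → X) : Prop :=
  ∀ (i : Fin n) (Li Li' : LinearOrder X), ¬ IsObviousManip f i Li Li'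

/-- `f` is tops-only. -/
def TopsOnly {n : ℕ} {X : Type*} [Fintype X] [Nonempty X] (f : Profile n X → X) : Prop :=
  ∀ P P' : Profile n X, (∀ i, top (P i) = top (P' i)) → f P = f P'

/-- The set `V_i` of alternatives that agent `i` vetoes via some preference. -/
def VetoSet {n : ℕ} {X : Type*} (f : Profile n X → X) (i : Fin n) : Set X :=
  {x | ∃ L : LinearOrder X, x ∉ OptionSet f i L}

/-- The set `SV_i` of alternatives strongly vetoed by agent `i`:
`x` is vetoed via `L` precisely when the top of `L` differs from `x`. -/
def StrongVetoSet {n : ℕ} {X : Type*} [Fintype X] [Nonempty X]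
    (f : Profile n X → X) (i : Fin n) : Set X :=
  {x | ∀ L : LinearOrder X, x ∉ OptionSet f i L ↔ top L ≠ x}

/-- `f` is dictatorial: some agent's top alternative is always selected. -/
def Dictatorial {n : ℕ} {X : Type*} [Fintype X] [Nonempty X]
    (f : Profile n X → X) : Prop :=
  ∃ i : Fin n, ∀ P : Profile n X, f P = top (P i)

/-- The ordered set of alternatives `X = {a, a+1, ..., b} ⊆ ℕ`. -/
abbrev Alt (a b : ℕ) : Type := {x : ℕ // x ∈ Finset.Icc a b}

/-- `p` is a monotonic family of fixed ballots: `p_N = a`, `p_∅ = b`, and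
`S ⊆ T` implies `p_T ≤ p_S`. -/
def MonotonicFamily {n a b : ℕ} (p : Finset (Fin n) → Alt a b) : Prop :=
  (p Finset.univ).val = a ∧ (p ∅).val = b ∧
    ∀ S T : Finset (Fin n), S ⊆ T → p T ≤ p S

/-- The generalized median voter scheme associated with the family `p`:
`f^p(P) = min_{S ⊆ N} max_{j ∈ S} {t(P_j), p_S}`. -/
noncomputable def gms {n a b : ℕ} [Nonempty (Alt a b)]
    (p : Finset (Fin n) → Alt a b) (P : Profile n (Alt a b)) : Alt a b :=
  Finset.univ.inf' ⟨∅, Finset.mem_univ _⟩ fun S : Finset (Fin n) =>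
    (insert (p S) (S.image fun j => top (P j))).max' (Finset.insert_nonempty _ _)

/-! If `x < p_{{i}}` for some alternative `x`, let agent `i` rank `x` first and `p_{{i}}` last.
Against opponents all topping at `p_{N∖{i}}` the outcome is `p_{{i}}`, her worst alternative,
while any report topped by `p_{N∖{i}}` guarantees `p_{N∖{i}}`: an obvious manipulation, since the
worst case of the lie beats the worst case of the truth. Hence `p_{{i}}` is the least alternative,
dually `p_{N∖{i}}` is the greatest, and then `f^p` always picks `i`'s top. -/

lemma top_eq_of_forall_le {X : Type*} [Fintype X] [Nonempty X] (L : LinearOrder X) {x : X}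
    (h : ∀ y, L.le y x) : top L = x :=
  letI := L
  le_antisymm (Finset.max'_le _ _ _ fun y _ => h y) (Finset.le_max' _ _ (Finset.mem_univ x))

lemma NOM.not_prefers {n : ℕ} {X : Type*} {f : Profile n X → X} (hnom : NOM f) {i : Fin n}
    {L L' : LinearOrder X} {y : X} (hy : ∀ P : Profile n X, P i = L' → f P = y)
    {P : Profile n X} (hP : P i = L) : ¬ prefers L y (f P) := by
  intro hpref
  refine hnom i L L' ⟨⟨P, hP, ?_⟩, Or.inl ⟨f P, ⟨P, hP, rfl⟩, ?_⟩⟩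
  · rwa [hy _ (Function.update_self ..)]
  · rintro _ ⟨P', hP', rfl⟩
    rwa [hy P' hP']

lemma Profile.exists_eq_of_ne {n : ℕ} {X : Type*} (i : Fin n) (L L' : LinearOrder X) :
    ∃ P : Profile n X, P i = L ∧ ∀ j ≠ i, P j = L' :=
  ⟨Function.update (fun _ => L') i L, Function.update_self ..,
    fun _ hj => Function.update_of_ne hj ..⟩

section TopBotOrder

variable {X : Type*} [LinearOrder X]

def topBotRank (x z y : X) : ℕ :=
  if y = x then 2 else if y = z then 0 else 1

/-- The preference that ranks `x` first, `z` last (when `z ≠ x`), and the other alternatives in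
between in the ambient order. -/
@[reducible] def topBotOrder (x z : X) : LinearOrder X :=
  LinearOrder.lift' (fun y => toLex (topBotRank x z y, y))
    fun _ _ h => congrArg (fun w => (ofLex w).2) h

lemma topBotOrder_lt_of_rank_lt {x z y w : X} (h : topBotRank x z y < topBotRank x z w) :
    (topBotOrder x z).lt y w :=
  Prod.Lex.toLex_lt_toLex.mpr (Or.inl h)

lemma prefers_topBotOrder {x z y : X} (hzx : z ≠ x) (hyz : y ≠ z) :
    prefers (topBotOrder x z) y z := by
  refine topBotOrder_lt_of_rank_lt ?_
  simp only [topBotRank, hzx, hyz, if_true, if_false]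
  split_ifs <;> omega

lemma top_topBotOrder [Fintype X] [Nonempty X] (x z : X) : top (topBotOrder x z) = x := by
  refine top_eq_of_forall_le _ fun y => Prod.Lex.toLex_le_toLex.mpr ?_
  by_cases hy : y = x
  · exact Or.inr ⟨by rw [hy], hy.le⟩
  · left
    simp only [topBotRank, hy, if_true, if_false]
    split_ifs <;> omega

end TopBotOrder

section GMS

variable {n a b : ℕ} [Nonempty (Alt a b)] {p : Finset (Fin n) → Alt a b}

lemma gms_le (P : Profile n (Alt a b)) (S : Finset (Fin n)) {m : Alt a b}
    (hpS : p S ≤ m) (htop : ∀ j ∈ S, top (P j) ≤ m) : gms p P ≤ m := by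
  refine le_trans (Finset.inf'_le _ (Finset.mem_univ S)) (Finset.max'_le _ _ _ fun y hy => ?_)
  rcases Finset.mem_insert.mp hy with rfl | hy
  · exact hpS
  · obtain ⟨j, hj, rfl⟩ := Finset.mem_image.mp hy
    exact htop j hj

lemma le_gms (P : Profile n (Alt a b)) {m : Alt a b}
    (h : ∀ S : Finset (Fin n), m ≤ p S ∨ ∃ j ∈ S, m ≤ top (P j)) : m ≤ gms p P := by
  refine Finset.le_inf' _ _ fun S _ => ?_
  rcases h S with h | ⟨j, hj, hm⟩
  · exact h.trans (Finset.le_max' _ _ (Finset.mem_insert_self _ _))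
  · exact hm.trans <| Finset.le_max' _ _ <|
      Finset.mem_insert_of_mem (Finset.mem_image_of_mem (fun j => top (P j)) hj)

lemma gms_eq_top (hp : Antitone p) {i : Fin n} {P : Profile n (Alt a b)}
    (h₁ : p {i} ≤ top (P i)) (h₂ : top (P i) ≤ p (Finset.univ.erase i)) :
    gms p P = top (P i) := by
  refine le_antisymm (gms_le P {i} h₁ fun j hj => (Finset.mem_singleton.mp hj).symm ▸ le_rfl)
    (le_gms P fun S => ?_)
  by_cases hi : i ∈ S
  · exact Or.inr ⟨i, hi, le_rfl⟩
  · exact Or.inl (h₂.trans (hp (Finset.subset_erase.mpr ⟨Finset.subset_univ S, hi⟩)))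

lemma gms_eq_singleton (hp : Antitone p) {i : Fin n} {P : Profile n (Alt a b)}
    (hi : top (P i) ≤ p {i}) (hothers : ∀ j ≠ i, p {i} ≤ top (P j)) :
    gms p P = p {i} := by
  refine le_antisymm (gms_le P {i} le_rfl fun j hj => (Finset.mem_singleton.mp hj).symm ▸ hi)
    (le_gms P fun S => ?_)
  by_cases hS : S ⊆ {i}
  · exact Or.inl (hp hS)
  · obtain ⟨j, hj, hji⟩ := Finset.not_subset.mp hS
    exact Or.inr ⟨j, hj, hothers j (Finset.mem_singleton.not.mp hji)⟩

lemma gms_eq_erase (hp : Antitone p) {i : Fin n} {P : Profile n (Alt a b)}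
    (hi : p (Finset.univ.erase i) ≤ top (P i))
    (hothers : ∀ j ≠ i, top (P j) ≤ p (Finset.univ.erase i)) :
    gms p P = p (Finset.univ.erase i) := by
  refine le_antisymm
    (gms_le P _ le_rfl fun j hj => hothers j (Finset.mem_erase.mp hj).1) (le_gms P fun S => ?_)
  by_cases hiS : i ∈ S
  · exact Or.inr ⟨i, hiS, hi⟩
  · exact Or.inl (hp (Finset.subset_erase.mpr ⟨Finset.subset_univ S, hiS⟩))

variable (hp : Antitone p) {i : Fin n} (hlt : p {i} < p (Finset.univ.erase i))
  (hnom : NOM (gms p))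
include hp hlt hnom

lemma singleton_le_of_nom (x : Alt a b) : p {i} ≤ x := by
  by_contra! hx
  have hL' : ∀ P : Profile n (Alt a b),
      P i = topBotOrder (p (Finset.univ.erase i)) x → gms p P = p (Finset.univ.erase i) :=
    fun P hP => by
      have htop : top (P i) = p (Finset.univ.erase i) := hP ▸ top_topBotOrder _ _
      exact htop ▸ gms_eq_top hp (htop ▸ hlt.le) htop.le
  obtain ⟨P₀, hP₀i, hP₀j⟩ :=
    Profile.exists_eq_of_ne i (topBotOrder x (p {i})) (topBotOrder (p (Finset.univ.erase i)) x)
  have hP₀ : gms p P₀ = p {i} := by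
    refine gms_eq_singleton hp ?_ fun j hj => ?_
    · rw [hP₀i, top_topBotOrder]; exact hx.le
    · rw [hP₀j j hj, top_topBotOrder]; exact hlt.le
  refine hnom.not_prefers hL' hP₀i ?_
  rw [hP₀]
  exact prefers_topBotOrder hx.ne' hlt.ne'

lemma le_erase_of_nom (x : Alt a b) : x ≤ p (Finset.univ.erase i) := by
  by_contra! hx
  have hL' : ∀ P : Profile n (Alt a b), P i = topBotOrder (p {i}) x → gms p P = p {i} :=
    fun P hP => by
      have htop : top (P i) = p {i} := hP ▸ top_topBotOrder _ _
      exact htop ▸ gms_eq_top hp htop.ge (htop ▸ hlt.le)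
  obtain ⟨P₀, hP₀i, hP₀j⟩ :=
    Profile.exists_eq_of_ne i (topBotOrder x (p (Finset.univ.erase i))) (topBotOrder (p {i}) x)
  have hP₀ : gms p P₀ = p (Finset.univ.erase i) := by
    refine gms_eq_erase hp ?_ fun j hj => ?_
    · rw [hP₀i, top_topBotOrder]; exact hx.le
    · rw [hP₀j j hj, top_topBotOrder]; exact hlt.le
  refine hnom.not_prefers hL' hP₀i ?_
  rw [hP₀]
  exact prefers_topBotOrder hx.ne hlt.ne

end GMS

theorem gms_dictator_general {n a b : ℕ} [Nonempty (Alt a b)]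
    (p : Finset (Fin n) → Alt a b) (hp : MonotonicFamily p) (i : Fin n)
    (hlt : p {i} < p (Finset.univ.erase i)) (hnom : NOM (gms p)) :
    ∀ P : Profile n (Alt a b), gms p P = top (P i) := fun P =>
  gms_eq_top (P := P) hp.2.2 (singleton_le_of_nom hp.2.2 hlt hnom _)
    (le_erase_of_nom hp.2.2 hlt hnom _)

/-- If a generalized median voter scheme satisfies `p_{{i}} < p_{N\{i}}` for some agent
`i` and is NOM, then agent `i` is a dictator. -/
theorem gms_dictator {n a b : ℕ} [Nonempty (Alt a b)]
    (hn : 2 ≤ n) (hab : a ≤ b)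
    (p : Finset (Fin n) → Alt a b) (hp : MonotonicFamily p) (i : Fin n)
    (hlt : p {i} < p (Finset.univ.erase i)) (hnom : NOM (gms p)) :
    ∀ P : Profile n (Alt a b), gms p P = top (P i) :=
  gms_dictator_general p hp i hlt hnom
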